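/- Grönwall-type uniqueness for the fractional integral equation: let β ∈ (0,1), L > 0, and let u : [0,T] → [0,∞) be continuous with u(t) ≤ L·(1/Γ(β)) ∫₀^t (t−s)^{β−1} u(s) ds for all t ∈ [0,T]. Then u ≡ 0 on [0,T]. -/
import Mathlib


open MeasureTheory intervalIntegral

/-- Fractional Grönwall inequality with zero inhomogeneity: a nonnegative
continuous function dominated by `L` times its own fractional integral
vanishes identically. -/
theorem fractional_gronwall_zero
    (β T L : ℝ) (hβ : β ∈ Set.Ioo (0:ℝ) 1) (hT : 0 < T) (hL : 0 < L)
    (u : ℝ → ℝ) (hu : ContinuousOn u (Set.Icc 0 T))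
    (hpos : ∀ t ∈ Set.Icc (0:ℝ) T, 0 ≤ u t)
    (hineq : ∀ t ∈ Set.Icc (0:ℝ) T,
      u t ≤ L * ((1 / Real.Gamma β) * ∫ s in (0:ℝ)..t, (t - s) ^ (β - 1) * u s)) :
    ∀ t ∈ Set.Icc (0:ℝ) T, u t = 0 := by
  obtain ⟨hβ0, hβ1⟩ := hβ
  have hΓ : 0 < Real.Gamma β := Real.Gamma_pos_of_pos hβ0
  have hbase : 0 < β * Real.Gamma β / (2 * L) := by positivity
  set δ : ℝ := (β * Real.Gamma β / (2 * L)) ^ (1/β) with hδdef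
  have hδpos : 0 < δ := Real.rpow_pos_of_pos hbase _
  have hδβ : δ ^ β = β * Real.Gamma β / (2 * L) := by
    rw [hδdef, ← Real.rpow_mul hbase.le, one_div, inv_mul_cancel₀ (ne_of_gt hβ0),
      Real.rpow_one]
  -- the key step lemma
  have key : ∀ a ∈ Set.Icc (0:ℝ) T, (∀ s ∈ Set.Icc (0:ℝ) a, u s = 0) →
      ∀ s ∈ Set.Icc (0:ℝ) (min T (a + δ)), u s = 0 := by
    intro a ha h0
    set b := min T (a + δ) with hb
    have hab : a ≤ b := le_min ha.2 (by linarith)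
    have hbT : b ≤ T := min_le_left _ _
    have hba : b ≤ a + δ := min_le_right _ _
    obtain ⟨c, hc, hcmax⟩ := IsCompact.exists_isMaxOn isCompact_Icc (Set.nonempty_Icc.2 hab)
      (hu.mono (Set.Icc_subset_Icc ha.1 hbT))
    have hac : a ≤ c := hc.1
    have hcb : c ≤ b := hc.2
    have h0c : (0:ℝ) ≤ c := le_trans ha.1 hac
    have hc0T : c ∈ Set.Icc (0:ℝ) T := ⟨h0c, le_trans hcb hbT⟩
    -- integrability of the kernel and products
    have hK : IntervalIntegrable (fun s => (c - s) ^ (β - 1)) volume 0 c := by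
      have := (intervalIntegrable_rpow' (a := c) (b := 0)
        (by linarith : (-1:ℝ) < β - 1)).comp_sub_left c
      simpa using this
    have hKu : IntervalIntegrable (fun s => (c - s) ^ (β - 1) * u s) volume 0 c := by
      apply hK.mul_continuousOn
      apply hu.mono
      rw [Set.uIcc_of_le h0c]
      exact Set.Icc_subset_Icc le_rfl hc0T.2
    have hKu1 : IntervalIntegrable (fun s => (c - s) ^ (β - 1) * u s) volume 0 a := by
      apply hKu.mono_set
      rw [Set.uIcc_of_le h0c, Set.uIcc_of_le ha.1]
      exact Set.Icc_subset_Icc le_rfl hac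
    have hKu2 : IntervalIntegrable (fun s => (c - s) ^ (β - 1) * u s) volume a c := by
      apply hKu.mono_set
      rw [Set.uIcc_of_le h0c, Set.uIcc_of_le hac]
      exact Set.Icc_subset_Icc ha.1 le_rfl
    have hKc : IntervalIntegrable (fun s => (c - s) ^ (β - 1) * u c) volume a c := by
      apply IntervalIntegrable.mul_const
      apply hK.mono_set
      rw [Set.uIcc_of_le h0c, Set.uIcc_of_le hac]
      exact Set.Icc_subset_Icc ha.1 le_rfl
    -- the integral over [0,a] vanishes
    have hz : (∫ s in (0:ℝ)..a, (c - s) ^ (β - 1) * u s) = 0 := by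
      have heq : Set.EqOn (fun s => (c - s) ^ (β - 1) * u s) (fun _ => (0:ℝ))
          (Set.uIcc 0 a) := by
        intro s hs
        rw [Set.uIcc_of_le ha.1] at hs
        simp [h0 s hs]
      rw [intervalIntegral.integral_congr heq, intervalIntegral.integral_zero]
    have hsplit : (∫ s in (0:ℝ)..c, (c - s) ^ (β - 1) * u s)
        = ∫ s in a..c, (c - s) ^ (β - 1) * u s := by
      rw [← intervalIntegral.integral_add_adjacent_intervals hKu1 hKu2, hz, zero_add]
    -- bound the integral over [a,c]
    have hmono : (∫ s in a..c, (c - s) ^ (β - 1) * u s)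
        ≤ ∫ s in a..c, (c - s) ^ (β - 1) * u c := by
      apply intervalIntegral.integral_mono_on hac hKu2 hKc
      intro s hs
      have hker : (0:ℝ) ≤ (c - s) ^ (β - 1) := Real.rpow_nonneg (by linarith [hs.2]) _
      exact mul_le_mul_of_nonneg_left (hcmax ⟨hs.1, le_trans hs.2 hcb⟩) hker
    have hval : (∫ s in a..c, (c - s) ^ (β - 1) * u c) = (c - a) ^ β / β * u c := by
      rw [intervalIntegral.integral_mul_const]
      congr 1
      rw [intervalIntegral.integral_comp_sub_left (fun x => x ^ (β - 1)) c, sub_self,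
        integral_rpow (Or.inl (by linarith : (-1:ℝ) < β - 1)), sub_add_cancel,
        Real.zero_rpow (ne_of_gt hβ0), sub_zero]
    have hucnn : 0 ≤ u c := hpos c hc0T
    have hcaδ : (c - a) ^ β ≤ δ ^ β :=
      Real.rpow_le_rpow (by linarith) (by linarith) hβ0.le
    have hchain : u c ≤ L * (1 / Real.Gamma β * (δ ^ β / β * u c)) := by
      have h1 := hineq c hc0T
      rw [hsplit] at h1
      refine h1.trans ?_
      have h2 : (∫ s in a..c, (c - s) ^ (β - 1) * u s) ≤ δ ^ β / β * u c := by
        refine (hmono.trans hval.le).trans ?_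
        gcongr
      gcongr
    have hhalf : L * (1 / Real.Gamma β * (δ ^ β / β * u c)) = u c / 2 := by
      rw [hδβ]; field_simp
    have huc : u c = 0 := le_antisymm (by rw [hhalf] at hchain; linarith) hucnn
    intro s hs
    rcases le_total s a with h | h
    · exact h0 s ⟨hs.1, h⟩
    · have hsab : s ∈ Set.Icc a b := ⟨h, hs.2⟩
      have h1 := hcmax hsab
      rw [huc] at h1
      exact le_antisymm h1 (hpos s ⟨hs.1, le_trans hs.2 hbT⟩)
  -- u 0 = 0
  have hu0 : u 0 = 0 := by
    have h := hineq 0 ⟨le_refl _, hT.le⟩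
    rw [intervalIntegral.integral_same] at h
    simp only [mul_zero] at h
    exact le_antisymm h (hpos 0 ⟨le_refl _, hT.le⟩)
  -- induction on steps of size δ
  have ind : ∀ n : ℕ, ∀ s ∈ Set.Icc (0:ℝ) (min T ((n:ℝ) * δ)), u s = 0 := by
    intro n
    induction n with
    | zero =>
      intro s hs
      simp only [Nat.cast_zero, zero_mul, min_eq_right hT.le] at hs
      have : s = 0 := le_antisymm hs.2 hs.1
      rw [this]; exact hu0
    | succ n ih =>
      have ha : min T ((n:ℝ) * δ) ∈ Set.Icc (0:ℝ) T :=
        ⟨le_min hT.le (by positivity), min_le_left _ _⟩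
      intro s hs
      apply key _ ha ih
      refine ⟨hs.1, le_trans hs.2 ?_⟩
      rcases le_total ((n:ℝ) * δ) T with h | h
      · rw [min_eq_right h]
        apply le_of_eq_of_le (b := min T ((n:ℝ) * δ + δ))
        · congr 1; push_cast; ring
        · exact le_rfl
      · rw [min_eq_left h]
        exact le_trans (min_le_left _ _) (le_min le_rfl (by linarith))
  intro t ht
  obtain ⟨n, hn⟩ := exists_nat_ge (T / δ)
  have hTn : T ≤ (n:ℝ) * δ := by
    rw [div_le_iff₀ hδpos] at hn; linarith
  exact ind n t ⟨ht.1, by rw [min_eq_left hTn]; exact ht.2⟩
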